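/- arXiv:math/0208047 — 3 statements merged into one kernel-verified Lean document; each statement's English description precedes it below -/
import Mathlib

section
/- Let T be a faithfully flat H-Galois object over k. Then the map μ is coassociative: (id_T ⊗ id_T ⊗ μ)∘μ = (μ ⊗ id_T ⊗ id_T)∘μ as maps T → T ⊗ T ⊗ T ⊗ T ⊗ T. -/
/-!
Applying `β ⊗ id` to `x ⊗ y₍₀₎ ⊗ y₍₁₎` gives `x y₍₀₎ ⊗ y₍₁₎ ⊗ y₍₂₎`, i.e. `β` is colinear.
Since `β ⊗ id` is bijective, colinearity transfers to the translation map: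
`h⁽¹⁾ ⊗ h⁽²⁾₍₀₎ ⊗ h⁽²⁾₍₁₎ = h₍₁₎⁽¹⁾ ⊗ h₍₁₎⁽²⁾ ⊗ h₍₂₎`, whence `(id ⊗ μ) ∘ γ = (γ ⊗ γ) ∘ Δ`.
Both sides of the coassociativity of `μ` then become `(id ⊗ γ ⊗ γ)` applied to
`x₍₀₎ ⊗ x₍₁₎ ⊗ x₍₂₎`, by coassociativity of `ρ`.
-/

open TensorProduct LinearMap

theorem Algebra.TensorProduct.tmul_one_mul {k A B : Type*} [CommSemiring k] [Semiring A]
    [Algebra k A] [Semiring B] [Algebra k B] (a : A) (v : A ⊗[k] B) :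
    (a ⊗ₜ[k] (1 : B)) * v = LinearMap.rTensor B (mulLeft k a) v := by
  rw [← mulLeft_apply (R := k), mulLeft_tmul, mulLeft_one]
  rfl

theorem TensorProduct.assoc_symm_tmul_eq_rTensor_mk {R M N P : Type*} [CommSemiring R]
    [AddCommMonoid M] [AddCommMonoid N] [AddCommMonoid P] [Module R M] [Module R N] [Module R P]
    (m : M) (x : N ⊗[R] P) :
    (TensorProduct.assoc R M N P).symm (m ⊗ₜ x) = rTensor P (mk R M N m) x :=
  x.induction_on (by simp) (fun _ _ => rfl) fun _ _ hx hy => by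
    rw [tmul_add, map_add, map_add, hx, hy]

theorem LinearMap.rTensor_rTensor_assoc_symm {R M N P Q : Type*} [CommSemiring R]
    [AddCommMonoid M] [AddCommMonoid N] [AddCommMonoid P] [AddCommMonoid Q] [Module R M]
    [Module R N] [Module R P] [Module R Q] (f : M →ₗ[R] Q) (x : M ⊗[R] (N ⊗[R] P)) :
    rTensor P (rTensor N f) ((TensorProduct.assoc R M N P).symm x)
      = (TensorProduct.assoc R Q N P).symm (rTensor (N ⊗[R] P) f x) := by
  simp [rTensor_tensor]

theorem LinearMap.lTensor_lTensor_comp_assoc {R M N P Q : Type*} [CommSemiring R]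
    [AddCommMonoid M] [AddCommMonoid N] [AddCommMonoid P] [AddCommMonoid Q] [Module R M]
    [Module R N] [Module R P] [Module R Q] (g : P →ₗ[R] Q) :
    lTensor M (lTensor N g) ∘ₗ (TensorProduct.assoc R M N P).toLinearMap
      = (TensorProduct.assoc R M N Q).toLinearMap ∘ₗ lTensor (M ⊗[R] N) g :=
  TensorProduct.ext_threefold fun _ _ _ => rfl

namespace GaloisObject

variable {k H T : Type*} [CommSemiring k] [AddCommMonoid H] [Module k H] [Coalgebra k H]
  [Semiring T] [Algebra k T] {ρ : T →ₗ[k] T ⊗[k] H}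
  (hρ : rTensor H ρ ∘ₗ ρ = (TensorProduct.assoc k T H H).symm.toLinearMap ∘ₗ
    lTensor T (Coalgebra.comul (R := k) (A := H)) ∘ₗ ρ)
  {β : T ⊗[k] T →ₗ[k] T ⊗[k] H}
  (hβ : ∀ x y : T, β (x ⊗ₜ y) = rTensor H (mulLeft k x) (ρ y))

include hρ hβ

theorem rTensor_canonicalMap_comp_lTensor_coaction :
    rTensor H β ∘ₗ (TensorProduct.assoc k T T H).symm.toLinearMap ∘ₗ lTensor T ρ
      = (TensorProduct.assoc k T H H).symm.toLinearMap ∘ₗ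
          lTensor T (Coalgebra.comul (R := k) (A := H)) ∘ₗ β := by
  refine TensorProduct.ext' fun a y => ?_
  have hβa : β ∘ₗ mk k T T a = rTensor H (mulLeft k a) ∘ₗ ρ := LinearMap.ext (hβ a)
  calc rTensor H β ((TensorProduct.assoc k T T H).symm (a ⊗ₜ ρ y))
      = rTensor H (rTensor H (mulLeft k a)) (rTensor H ρ (ρ y)) := by
        rw [assoc_symm_tmul_eq_rTensor_mk, ← rTensor_comp_apply, hβa, rTensor_comp_apply]
    _ = (TensorProduct.assoc k T H H).symm
          (rTensor (H ⊗[k] H) (mulLeft k a) (lTensor T Coalgebra.comul (ρ y))) := by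
        rw [← comp_apply _ ρ, hρ, comp_apply, comp_apply, LinearEquiv.coe_coe,
          rTensor_rTensor_assoc_symm]
    _ = (TensorProduct.assoc k T H H).symm (lTensor T Coalgebra.comul (β (a ⊗ₜ y))) := by
        rw [hβ, ← comp_apply, rTensor_comp_lTensor, ← lTensor_comp_rTensor, comp_apply]

variable (hβbij : Function.Bijective β) {γ : H →ₗ[k] T ⊗[k] T}
  (hγ : ∀ h, β (γ h) = 1 ⊗ₜ h)
include hβbij hγ

local notation "μ" => lTensor T γ ∘ₗ ρ

theorem lTensor_coaction_comp_translation :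
    lTensor T ρ ∘ₗ γ = (TensorProduct.assoc k T T H).toLinearMap ∘ₗ rTensor H γ ∘ₗ
      Coalgebra.comul (R := k) (A := H) := by
  have hβγ : β ∘ₗ γ = mk k T H 1 := LinearMap.ext hγ
  have hinj : Function.Injective
      (rTensor H β ∘ₗ (TensorProduct.assoc k T T H).symm.toLinearMap) :=
    (LinearEquiv.rTensor H (LinearEquiv.ofBijective β hβbij)).injective.comp
      (TensorProduct.assoc k T T H).symm.injective
  refine LinearMap.ext fun h => hinj ?_
  calc rTensor H β ((TensorProduct.assoc k T T H).symm (lTensor T ρ (γ h)))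
      = (TensorProduct.assoc k T H H).symm (lTensor T Coalgebra.comul (β (γ h))) :=
        LinearMap.congr_fun (rTensor_canonicalMap_comp_lTensor_coaction hρ hβ) (γ h)
    _ = rTensor H (β ∘ₗ γ) (Coalgebra.comul h) := by
        rw [hγ, hβγ, lTensor_tmul, assoc_symm_tmul_eq_rTensor_mk]
    _ = rTensor H β ((TensorProduct.assoc k T T H).symm
          ((TensorProduct.assoc k T T H) (rTensor H γ (Coalgebra.comul h)))) := by
        rw [LinearEquiv.symm_apply_apply, rTensor_comp_apply]

theorem lTensor_mu_comp_translation :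
    lTensor T μ ∘ₗ γ = (TensorProduct.assoc k T T (T ⊗[k] T)).toLinearMap ∘ₗ
      map γ γ ∘ₗ Coalgebra.comul (R := k) (A := H) := by
  rw [lTensor_comp, comp_assoc, lTensor_coaction_comp_translation hρ hβ hβbij hγ, ← comp_assoc,
    ← comp_assoc, lTensor_lTensor_comp_assoc, comp_assoc, comp_assoc,
    ← comp_assoc _ (rTensor H γ), ← lTensor_comp_rTensor]

theorem mu_coassoc :
    lTensor T (lTensor T μ) ∘ₗ μ
      = lTensor T (TensorProduct.assoc k T T (T ⊗[k] T)).toLinearMap ∘ₗ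
          (TensorProduct.assoc k T (T ⊗[k] T) (T ⊗[k] T)).toLinearMap ∘ₗ
          rTensor (T ⊗[k] T) μ ∘ₗ μ := by
  have hcomul : lTensor T Coalgebra.comul ∘ₗ ρ
      = (TensorProduct.assoc k T H H).toLinearMap ∘ₗ rTensor H ρ ∘ₗ ρ :=
    (LinearEquiv.toLinearMap_symm_comp_eq _ _).mp hρ.symm
  calc lTensor T (lTensor T μ) ∘ₗ μ
      = lTensor T (TensorProduct.assoc k T T (T ⊗[k] T)).toLinearMap ∘ₗ
          lTensor T (map γ γ) ∘ₗ lTensor T Coalgebra.comul ∘ₗ ρ := by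
        rw [← comp_assoc, ← lTensor_comp, lTensor_mu_comp_translation hρ hβ hβbij hγ,
          lTensor_comp, lTensor_comp]
        simp only [comp_assoc]
    _ = lTensor T (TensorProduct.assoc k T T (T ⊗[k] T)).toLinearMap ∘ₗ
          (TensorProduct.assoc k T (T ⊗[k] T) (T ⊗[k] T)).toLinearMap ∘ₗ
          map (lTensor T γ) γ ∘ₗ rTensor H ρ ∘ₗ ρ := by
        have hnat : lTensor T (map γ γ) ∘ₗ (TensorProduct.assoc k T H H).toLinearMap
            = (TensorProduct.assoc k T (T ⊗[k] T) (T ⊗[k] T)).toLinearMap ∘ₗ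
                map (lTensor T γ) γ :=
          map_map_comp_assoc_eq _ _ _
        rw [hcomul, ← comp_assoc (rTensor H ρ ∘ₗ ρ), hnat, comp_assoc]
    _ = _ := by
        rw [← comp_assoc ρ (rTensor H ρ), map_comp_rTensor, ← comp_assoc ρ (lTensor T γ),
          rTensor_comp_lTensor]

end GaloisObject

theorem stmt_5_general
    {k : Type*} [CommRing k] {H : Type*} [Ring H] [HopfAlgebra k H]
    {T : Type*} [Ring T] [Algebra k T]
    -- `ρ` is an algebra map making `T` a right `H`-comodule algebra:
    (ρ : T →ₐ[k] T ⊗[k] H)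
    (hcoassoc : ∀ x : T,
      (TensorProduct.map ρ.toLinearMap LinearMap.id) (ρ x)
        = (TensorProduct.assoc k T H H).symm
            ((TensorProduct.map LinearMap.id Coalgebra.comul) (ρ x)))
    -- the canonical (Galois) map `β(x ⊗ y) = x·y₍₀₎ ⊗ y₍₁₎`, assumed bijective:
    (β : T ⊗[k] T →ₗ[k] T ⊗[k] H)
    (hβ : ∀ x y : T, β (x ⊗ₜ[k] y) = (x ⊗ₜ[k] (1 : H)) * ρ y)
    (hβbij : Function.Bijective β)
    -- `γ(h) = β⁻¹(1 ⊗ h) = h⁽¹⁾ ⊗ h⁽²⁾`: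
    (γ : H →ₗ[k] T ⊗[k] T)
    (hγ : ∀ h : H, β (γ h) = (1 : T) ⊗ₜ[k] h)
    -- `μ(x) = x₍₀₎ ⊗ x₍₁₎⁽¹⁾ ⊗ x₍₁₎⁽²⁾`:
    (μ : T →ₗ[k] T ⊗[k] (T ⊗[k] T))
    (hμ : μ = (LinearMap.lTensor T γ) ∘ₗ ρ.toLinearMap) :
    ∀ x : T,
      (LinearMap.lTensor T (LinearMap.lTensor T μ)) (μ x)
        = (LinearMap.lTensor T (TensorProduct.assoc k T T (T ⊗[k] T)).toLinearMap)
            ((TensorProduct.assoc k T (T ⊗[k] T) (T ⊗[k] T))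
              ((LinearMap.rTensor (T ⊗[k] T) μ) (μ x))) := by
  subst hμ
  have hβ' (x y : T) : β (x ⊗ₜ y) = rTensor H (mulLeft k x) (ρ y) := by
    rw [hβ, Algebra.TensorProduct.tmul_one_mul]
  exact LinearMap.congr_fun
    (GaloisObject.mu_coassoc (LinearMap.ext hcoassoc) hβ' hβbij hγ)

/-- For a faithfully flat `H`-Galois object `T`, the map
`μ(x) = x₍₀₎ ⊗ x₍₁₎⁽¹⁾ ⊗ x₍₁₎⁽²⁾` is coassociative:
`(id ⊗ id ⊗ μ)∘μ = (μ ⊗ id ⊗ id)∘μ` as maps `T → T⊗T⊗T⊗T⊗T`. -/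
theorem stmt_5
    {k : Type*} [CommRing k] {H : Type*} [Ring H] [HopfAlgebra k H]
    {T : Type*} [Ring T] [Algebra k T]
    -- `ρ` is an algebra map making `T` a right `H`-comodule algebra:
    (ρ : T →ₐ[k] T ⊗[k] H)
    (hcoassoc : ∀ x : T,
      (TensorProduct.map ρ.toLinearMap LinearMap.id) (ρ x)
        = (TensorProduct.assoc k T H H).symm
            ((TensorProduct.map LinearMap.id Coalgebra.comul) (ρ x)))
    (hcounit : ∀ x : T,
      (TensorProduct.rid k T)
        ((TensorProduct.map LinearMap.id Coalgebra.counit) (ρ x)) = x)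
    -- the coinvariants are exactly `k·1`:
    (hcoinv : {t : T | ρ t = t ⊗ₜ[k] (1 : H)} = Set.range (algebraMap k T))
    -- `T` is faithfully flat over `k`:
    (hflat : Module.FaithfullyFlat k T)
    -- the canonical (Galois) map `β(x ⊗ y) = x·y₍₀₎ ⊗ y₍₁₎`, assumed bijective:
    (β : T ⊗[k] T →ₗ[k] T ⊗[k] H)
    (hβ : ∀ x y : T, β (x ⊗ₜ[k] y) = (x ⊗ₜ[k] (1 : H)) * ρ y)
    (hβbij : Function.Bijective β)
    -- `γ(h) = β⁻¹(1 ⊗ h) = h⁽¹⁾ ⊗ h⁽²⁾`: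
    (γ : H →ₗ[k] T ⊗[k] T)
    (hγ : ∀ h : H, β (γ h) = (1 : T) ⊗ₜ[k] h)
    -- `μ(x) = x₍₀₎ ⊗ x₍₁₎⁽¹⁾ ⊗ x₍₁₎⁽²⁾`:
    (μ : T →ₗ[k] T ⊗[k] (T ⊗[k] T))
    (hμ : μ = (LinearMap.lTensor T γ) ∘ₗ ρ.toLinearMap) :
    ∀ x : T,
      (LinearMap.lTensor T (LinearMap.lTensor T μ)) (μ x)
        = (LinearMap.lTensor T (TensorProduct.assoc k T T (T ⊗[k] T)).toLinearMap)
            ((TensorProduct.assoc k T (T ⊗[k] T) (T ⊗[k] T))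
              ((LinearMap.rTensor (T ⊗[k] T) μ) (μ x))) :=
  stmt_5_general ρ hcoassoc β hβ hβbij γ hγ μ hμ
end

section
/- Let T be a faithfully flat H-Galois object over k. Then for every h ∈ H one has h⁽¹⁾ ⊗ θ(h⁽²⁾) = S(h)⁽²⁾ ⊗ S(h)⁽¹⁾ in T ⊗ T; that is, (id_T ⊗ θ)(γ(h)) = τ(γ(S(h))), where τ : T ⊗ T → T ⊗ T is the flip of the two tensor factors. -/
open TensorProduct LinearMap HopfAlgebra

/-!
Read with its first leg in `Tᵐᵒᵖ`, the translation map becomes an algebra map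
`γ' : H → Tᵐᵒᵖ ⊗ T`, `h ↦ op h⁽¹⁾ ⊗ h⁽²⁾`, because `γ(gh) = h⁽¹⁾g⁽¹⁾ ⊗ g⁽²⁾h⁽²⁾`. In the
convolution algebra of linear maps `H → Tᵐᵒᵖ ⊗ T`, `γ' ∘ S` is therefore a left inverse of `γ'`.
The map `F(h) = op θ(h⁽²⁾) ⊗ h⁽¹⁾` is a right inverse: using the colinearity
`h⁽¹⁾ ⊗ h⁽²⁾₍₀₎ ⊗ h⁽²⁾₍₁₎ = h₍₁₎⁽¹⁾ ⊗ h₍₁₎⁽²⁾ ⊗ h₍₂₎` and `t₍₀₎t₍₁₎⁽¹⁾ ⊗ t₍₁₎⁽²⁾ = 1 ⊗ t`,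
`(γ' ⋆ F)(h)` collapses to `op(θ(h⁽²⁾)h⁽¹⁾) ⊗ 1`, and `θ(h⁽²⁾)h⁽¹⁾ = ε(h)` because it is
`h⁽¹⁾ ⊗ h⁽²⁾ ↦ h⁽²⁾h⁽¹⁾` applied to `γ(h₍₁₎S(h₍₂₎)) = ε(h) 1 ⊗ 1`. Hence `F = γ' ∘ S`.
-/

open WithConv in
theorem AlgHom.toConv_comp_antipode_mul_toConv {k H A : Type*} [CommSemiring k] [Semiring H]
    [HopfAlgebra k H] [Semiring A] [Algebra k A] (f : H →ₐ[k] A) :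
    toConv (f.toLinearMap ∘ₗ antipode k) * toConv f.toLinearMap = 1 := by
  apply ofConv_injective
  have hf := algHom_comp_convMul_distrib f (toConv (antipode k)) (toConv LinearMap.id)
  rw [antipode_mul_id, LinearMap.comp_id] at hf
  rw [← hf]
  ext h
  simp

section TensorAlgebra

variable {k A B C : Type*} [CommSemiring k] [Semiring A] [Algebra k A] [Semiring B] [Algebra k B]
  [Semiring C] [Algebra k C]

lemma rTensor_mul'_assoc_symm_tmul (x : A) (u : A ⊗[k] B) :
    rTensor B (mul' k A) ((TensorProduct.assoc k A A B).symm (x ⊗ₜ u)) = (x ⊗ₜ 1) * u := by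
  induction u using TensorProduct.induction_on with
  | zero => simp
  | tmul a b => simp [Algebra.TensorProduct.tmul_mul_tmul]
  | add u v hu hv => simp only [tmul_add, map_add, mul_add, hu, hv]

lemma lTensor_tmul_one_mul (f : B →ₗ[k] C) (x : A) (w : A ⊗[k] B) :
    lTensor A f ((x ⊗ₜ 1) * w) = (x ⊗ₜ 1) * lTensor A f w := by
  induction w using TensorProduct.induction_on with
  | zero => simp
  | tmul a b => simp [Algebra.TensorProduct.tmul_mul_tmul]
  | add u v hu hv => simp only [map_add, mul_add, hu, hv]

lemma assoc_symm_tmul_one_mul (x : A) (w : A ⊗[k] (B ⊗[k] C)) :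
    (TensorProduct.assoc k A B C).symm ((x ⊗ₜ 1) * w)
      = ((x ⊗ₜ 1) ⊗ₜ 1) * (TensorProduct.assoc k A B C).symm w := by
  induction w using TensorProduct.induction_on with
  | zero => simp
  | tmul a v =>
    induction v using TensorProduct.induction_on with
    | zero => simp
    | tmul b c => simp [Algebra.TensorProduct.tmul_mul_tmul]
    | add u v hu hv => simp only [tmul_add, map_add, mul_add, hu, hv]
  | add u v hu hv => simp only [map_add, mul_add, hu, hv]

end TensorAlgebra

section TensorSquare

variable (k T : Type*) [CommSemiring k] [Semiring T] [Algebra k T]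

noncomputable def opLeft : T ⊗[k] T ≃ₗ[k] Tᵐᵒᵖ ⊗[k] T :=
  (MulOpposite.opLinearEquiv k).rTensor T

noncomputable def mulFlip : T ⊗[k] (T ⊗[k] T) →ₗ[k] T :=
  mul' k T ∘ₗ (TensorProduct.comm k T T).toLinearMap ∘ₗ lTensor T (mul' k T)
    ∘ₗ (TensorProduct.assoc k T T T).toLinearMap ∘ₗ rTensor T (TensorProduct.comm k T T).toLinearMap
    ∘ₗ (TensorProduct.assoc k T T T).symm.toLinearMap

variable {k T}

@[simp] lemma opLeft_tmul (x y : T) : opLeft k T (x ⊗ₜ y) = MulOpposite.op x ⊗ₜ y := rfl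

@[simp] lemma opLeft_symm_tmul (x : Tᵐᵒᵖ) (y : T) :
    (opLeft k T).symm (x ⊗ₜ y) = x.unop ⊗ₜ y := rfl

@[simp] lemma mulFlip_tmul (y c d : T) : mulFlip k T (y ⊗ₜ (c ⊗ₜ d)) = y * d * c := by
  simp [mulFlip]

lemma opLeft_symm_mul_tmul (u : T ⊗[k] T) (a b : T) :
    (opLeft k T).symm (opLeft k T u * (MulOpposite.op a ⊗ₜ b)) = (a ⊗ₜ 1) * u * (1 ⊗ₜ b) := by
  induction u using TensorProduct.induction_on with
  | zero => simp
  | tmul x y => simp [Algebra.TensorProduct.tmul_mul_tmul]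
  | add u v hu hv => simp only [map_add, add_mul, mul_add, hu, hv]

lemma opLeft_comm_lTensor_tmul_one_mul (f : T →ₗ[k] T) (x : T) (u : T ⊗[k] T) :
    opLeft k T (TensorProduct.comm k T T (lTensor T f ((x ⊗ₜ 1) * u)))
      = (1 ⊗ₜ x) * opLeft k T (TensorProduct.comm k T T (lTensor T f u)) := by
  induction u using TensorProduct.induction_on with
  | zero => simp
  | tmul a b => simp [Algebra.TensorProduct.tmul_mul_tmul]
  | add u v hu hv => simp only [map_add, mul_add, hu, hv]

lemma mul'_map_opLeft_assoc_symm_tmul {H : Type*} [AddCommMonoid H] [Module k H]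
    (F : H →ₗ[k] Tᵐᵒᵖ ⊗[k] T) (a : T) (w : T ⊗[k] H) :
    mul' k _ (map (opLeft k T).toLinearMap F ((TensorProduct.assoc k T T H).symm (a ⊗ₜ w)))
      = (MulOpposite.op a ⊗ₜ 1)
          * mul' k _ (map (Algebra.TensorProduct.includeRight).toLinearMap F w) := by
  induction w using TensorProduct.induction_on with
  | zero => simp
  | tmul t g => simp [Algebra.TensorProduct.tmul_mul_tmul, ← mul_assoc]
  | add u v hu hv => simp only [tmul_add, map_add, mul_add, hu, hv]

lemma mul'_comm_lTensor_mulFlip_assoc (u v : T ⊗[k] T) :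
    mul' k T (TensorProduct.comm k T T
      (lTensor T (mulFlip k T) (TensorProduct.assoc k T T (T ⊗[k] T) (u ⊗ₜ v))))
      = mul' k T (TensorProduct.comm k T T ((opLeft k T).symm (opLeft k T u * opLeft k T v))) := by
  induction u using TensorProduct.induction_on with
  | zero => simp
  | tmul a b =>
    induction v using TensorProduct.induction_on with
    | zero => simp
    | tmul c d => simp [Algebra.TensorProduct.tmul_mul_tmul, mul_assoc]
    | add v w hv hw => simp only [tmul_add, map_add, mul_add, hv, hw]
  | add u w hu hw => simp only [add_tmul, map_add, add_mul, hu, hw]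

end TensorSquare

section Algebra

variable {k H T : Type*} [CommSemiring k] [Semiring H] [Algebra k H] [Semiring T] [Algebra k T]
  {ρ : T →ₐ[k] T ⊗[k] H} {β : T ⊗[k] T →ₗ[k] T ⊗[k] H} {γ : H →ₗ[k] T ⊗[k] T}

lemma galoisMap_tmul_one_mul (hβ : ∀ x y : T, β (x ⊗ₜ y) = (x ⊗ₜ 1) * ρ y) (x : T)
    (u : T ⊗[k] T) : β ((x ⊗ₜ 1) * u) = (x ⊗ₜ 1) * β u := by
  induction u using TensorProduct.induction_on with
  | zero => simp
  | tmul a b => simp [hβ, Algebra.TensorProduct.tmul_mul_tmul, ← mul_assoc]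
  | add u v hu hv => simp only [map_add, mul_add, hu, hv]

lemma galoisMap_mul_one_tmul (hβ : ∀ x y : T, β (x ⊗ₜ y) = (x ⊗ₜ 1) * ρ y) (u : T ⊗[k] T)
    (y : T) : β (u * (1 ⊗ₜ y)) = β u * ρ y := by
  induction u using TensorProduct.induction_on with
  | zero => simp
  | tmul a b => simp [hβ, Algebra.TensorProduct.tmul_mul_tmul, mul_assoc]
  | add u v hu hv => simp only [map_add, add_mul, hu, hv]

lemma translation_mul (hβ : ∀ x y : T, β (x ⊗ₜ y) = (x ⊗ₜ 1) * ρ y)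
    (hβinj : Function.Injective β) (hγ : ∀ h, β (γ h) = 1 ⊗ₜ h) (g h : H) :
    opLeft k T (γ (g * h)) = opLeft k T (γ g) * opLeft k T (γ h) := by
  have hleft : ∀ w, β ((opLeft k T).symm (opLeft k T (γ g) * opLeft k T w)) = (1 ⊗ₜ g) * β w := by
    intro w
    induction w using TensorProduct.induction_on with
    | zero => simp
    | tmul a b =>
      rw [opLeft_tmul, opLeft_symm_mul_tmul, galoisMap_mul_one_tmul hβ,
        galoisMap_tmul_one_mul hβ, hγ, hβ, ← mul_assoc, Algebra.TensorProduct.tmul_mul_tmul,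
        Algebra.TensorProduct.tmul_mul_tmul]
      simp
    | add u v hu hv => simp only [map_add, mul_add, hu, hv]
  rw [← LinearEquiv.apply_symm_apply (opLeft k T) (_ * _)]
  congr 1
  apply hβinj
  rw [hleft, hγ, hγ, Algebra.TensorProduct.tmul_mul_tmul, one_mul]

lemma translation_one (hβ : ∀ x y : T, β (x ⊗ₜ y) = (x ⊗ₜ 1) * ρ y)
    (hβinj : Function.Injective β) (hγ : ∀ h, β (γ h) = 1 ⊗ₜ h) : γ 1 = 1 := by
  apply hβinj
  rw [hγ, Algebra.TensorProduct.one_def, hβ, map_one, mul_one]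

noncomputable def translationAlgHom (hβ : ∀ x y : T, β (x ⊗ₜ y) = (x ⊗ₜ 1) * ρ y)
    (hβinj : Function.Injective β) (hγ : ∀ h, β (γ h) = 1 ⊗ₜ h) : H →ₐ[k] Tᵐᵒᵖ ⊗[k] T :=
  .ofLinearMap ((opLeft k T).toLinearMap ∘ₗ γ)
    (by simp [translation_one hβ hβinj hγ, Algebra.TensorProduct.one_def])
    (translation_mul hβ hβinj hγ)

lemma translation_coaction (hβ : ∀ x y : T, β (x ⊗ₜ y) = (x ⊗ₜ 1) * ρ y)
    (hβinj : Function.Injective β) (hγ : ∀ h, β (γ h) = 1 ⊗ₜ h) (t : T) :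
    rTensor T (mul' k T) ((TensorProduct.assoc k T T T).symm (lTensor T γ (ρ t))) = 1 ⊗ₜ t := by
  have hβγ : ∀ w,
      β (rTensor T (mul' k T) ((TensorProduct.assoc k T T T).symm (lTensor T γ w))) = w := by
    intro w
    induction w using TensorProduct.induction_on with
    | zero => simp
    | tmul x g =>
      rw [lTensor_tmul, rTensor_mul'_assoc_symm_tmul, galoisMap_tmul_one_mul hβ, hγ,
        Algebra.TensorProduct.tmul_mul_tmul, mul_one, one_mul]
    | add u v hu hv => simp only [map_add, hu, hv]
  apply hβinj
  rw [hβγ, hβ, ← Algebra.TensorProduct.one_def, one_mul]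

lemma mul'_map_includeRight_coaction (hβ : ∀ x y : T, β (x ⊗ₜ y) = (x ⊗ₜ 1) * ρ y)
    (hβinj : Function.Injective β) (hγ : ∀ h, β (γ h) = 1 ⊗ₜ h) (θ : T →ₗ[k] T) (t : T) :
    mul' k _ (map (Algebra.TensorProduct.includeRight).toLinearMap ((opLeft k T).toLinearMap
      ∘ₗ (TensorProduct.comm k T T).toLinearMap ∘ₗ lTensor T θ ∘ₗ γ) (ρ t))
      = MulOpposite.op (θ t) ⊗ₜ 1 := by
  have hmul : ∀ w : T ⊗[k] H,
      mul' k _ (map (Algebra.TensorProduct.includeRight).toLinearMap ((opLeft k T).toLinearMap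
        ∘ₗ (TensorProduct.comm k T T).toLinearMap ∘ₗ lTensor T θ ∘ₗ γ) w)
      = opLeft k T (TensorProduct.comm k T T (lTensor T θ
          (rTensor T (mul' k T) ((TensorProduct.assoc k T T T).symm (lTensor T γ w))))) := by
    intro w
    induction w using TensorProduct.induction_on with
    | zero => simp
    | tmul x g =>
      rw [lTensor_tmul, rTensor_mul'_assoc_symm_tmul, opLeft_comm_lTensor_tmul_one_mul]
      rfl
    | add u v hu hv => simp only [map_add, hu, hv]
  rw [hmul, translation_coaction hβ hβinj hγ]
  simp

end Algebra

section Bialgebra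

variable {k H T : Type*} [CommSemiring k] [Semiring H] [Bialgebra k H] [Semiring T] [Algebra k T]
  {ρ : T →ₐ[k] T ⊗[k] H} {β : T ⊗[k] T →ₗ[k] T ⊗[k] H} {γ : H →ₗ[k] T ⊗[k] T}

lemma rTensor_galoisMap_assoc_symm_tmul (hβ : ∀ x y : T, β (x ⊗ₜ y) = (x ⊗ₜ 1) * ρ y) (x : T)
    (w : T ⊗[k] H) :
    rTensor H β ((TensorProduct.assoc k T T H).symm (x ⊗ₜ w))
      = ((x ⊗ₜ 1) ⊗ₜ 1) * rTensor H ρ.toLinearMap w := by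
  induction w using TensorProduct.induction_on with
  | zero => simp
  | tmul t a => simp [hβ, Algebra.TensorProduct.tmul_mul_tmul]
  | add u v hu hv => simp only [tmul_add, map_add, mul_add, hu, hv]

lemma coaction_translation
    (hcoassoc : ∀ x : T, rTensor H ρ.toLinearMap (ρ x)
      = (TensorProduct.assoc k T H H).symm (lTensor T (Coalgebra.comul (R := k)) (ρ x)))
    (hβ : ∀ x y : T, β (x ⊗ₜ y) = (x ⊗ₜ 1) * ρ y) (hβbij : Function.Bijective β)
    (hγ : ∀ h, β (γ h) = 1 ⊗ₜ h) (h : H) :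
    (TensorProduct.assoc k T T H).symm (lTensor T ρ.toLinearMap (γ h))
      = rTensor H γ (Coalgebra.comul h) := by
  have hcolin : ∀ u, rTensor H β ((TensorProduct.assoc k T T H).symm (lTensor T ρ.toLinearMap u))
      = (TensorProduct.assoc k T H H).symm (lTensor T (Coalgebra.comul (R := k)) (β u)) := by
    intro u
    induction u using TensorProduct.induction_on with
    | zero => simp
    | tmul x y =>
      rw [lTensor_tmul, AlgHom.toLinearMap_apply, rTensor_galoisMap_assoc_symm_tmul hβ, hcoassoc,
        hβ, lTensor_tmul_one_mul, assoc_symm_tmul_one_mul]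
    | add u v hu hv => simp only [map_add, hu, hv]
  apply ((LinearEquiv.ofBijective β hβbij).rTensor H).injective
  change rTensor H β _ = rTensor H β _
  rw [hcolin, hγ, ← LinearMap.comp_apply (rTensor H β), ← rTensor_comp,
    show β ∘ₗ γ = TensorProduct.mk k T H 1 from LinearMap.ext hγ, lTensor_tmul]
  induction Coalgebra.comul (R := k) h using TensorProduct.induction_on with
  | zero => simp
  | tmul a b => simp
  | add u v hu hv => simp only [tmul_add, map_add, hu, hv]

end Bialgebra

section HopfAlgebra

variable {k H T : Type*} [CommSemiring k] [Semiring H] [HopfAlgebra k H] [Semiring T]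
  [Algebra k T] {ρ : T →ₐ[k] T ⊗[k] H} {β : T ⊗[k] T →ₗ[k] T ⊗[k] H} {γ : H →ₗ[k] T ⊗[k] T}
  {θ : T →ₗ[k] T}

lemma mul'_comm_lTensor_theta_translation
    (hcoassoc : ∀ x : T, rTensor H ρ.toLinearMap (ρ x)
      = (TensorProduct.assoc k T H H).symm (lTensor T (Coalgebra.comul (R := k)) (ρ x)))
    (hβ : ∀ x y : T, β (x ⊗ₜ y) = (x ⊗ₜ 1) * ρ y) (hβbij : Function.Bijective β)
    (hγ : ∀ h, β (γ h) = 1 ⊗ₜ h)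
    (hθ : θ = mulFlip k T ∘ₗ lTensor T (γ ∘ₗ antipode k) ∘ₗ ρ.toLinearMap) (h : H) :
    mul' k T (TensorProduct.comm k T T (lTensor T θ (γ h)))
      = algebraMap k T (Coalgebra.counit h) := by
  have hρ : lTensor T ρ.toLinearMap (γ h)
      = TensorProduct.assoc k T T H (rTensor H γ (Coalgebra.comul h)) := by
    rw [← coaction_translation hcoassoc hβ hβbij hγ, LinearEquiv.apply_symm_apply]
  have hmul : ∀ z : H ⊗[k] H,
      mul' k T (TensorProduct.comm k T T (lTensor T (mulFlip k T ∘ₗ lTensor T (γ ∘ₗ antipode k))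
        (TensorProduct.assoc k T T H (rTensor H γ z))))
      = mul' k T (TensorProduct.comm k T T (γ (mul' k H (lTensor H (antipode k) z)))) := by
    intro z
    induction z using TensorProduct.induction_on with
    | zero => simp
    | tmul g g' =>
      rw [rTensor_tmul, lTensor_tmul, mul'_apply, ← (opLeft k T).symm_apply_apply (γ (g * _)),
        translation_mul hβ hβbij.injective hγ, ← mul'_comm_lTensor_mulFlip_assoc]
      induction γ g using TensorProduct.induction_on with
      | zero => simp
      | tmul a b => simp
      | add u w hu hw => simp only [add_tmul, map_add, hu, hw]
    | add u w hu hw => simp only [map_add, hu, hw]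
  rw [hθ, lTensor_comp, lTensor_comp, comp_apply, comp_apply, hρ, ← comp_apply (lTensor T _),
    ← lTensor_comp, hmul, mul_antipode_lTensor_comul_apply, Algebra.algebraMap_eq_smul_one,
    map_smul, translation_one hβ hβbij.injective hγ]
  simp [Algebra.TensorProduct.one_def, Algebra.algebraMap_eq_smul_one]

open WithConv in
theorem translationAlgHom_convMul_opLeft_comm_lTensor
    (hcoassoc : ∀ x : T, rTensor H ρ.toLinearMap (ρ x)
      = (TensorProduct.assoc k T H H).symm (lTensor T (Coalgebra.comul (R := k)) (ρ x)))
    (hβ : ∀ x y : T, β (x ⊗ₜ y) = (x ⊗ₜ 1) * ρ y) (hβbij : Function.Bijective β)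
    (hγ : ∀ h, β (γ h) = 1 ⊗ₜ h)
    (hθ : θ = mulFlip k T ∘ₗ lTensor T (γ ∘ₗ antipode k) ∘ₗ ρ.toLinearMap) :
    toConv (translationAlgHom hβ hβbij.injective hγ).toLinearMap
      * toConv ((opLeft k T).toLinearMap ∘ₗ (TensorProduct.comm k T T).toLinearMap
          ∘ₗ lTensor T θ ∘ₗ γ) = 1 := by
  have hcollapse : ∀ u : T ⊗[k] T,
      mul' k _ (map (opLeft k T).toLinearMap ((opLeft k T).toLinearMap
          ∘ₗ (TensorProduct.comm k T T).toLinearMap ∘ₗ lTensor T θ ∘ₗ γ)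
        ((TensorProduct.assoc k T T H).symm (lTensor T ρ.toLinearMap u)))
      = MulOpposite.op (mul' k T (TensorProduct.comm k T T (lTensor T θ u))) ⊗ₜ 1 := by
    intro u
    induction u using TensorProduct.induction_on with
    | zero => simp
    | tmul a b =>
      rw [lTensor_tmul, AlgHom.toLinearMap_apply, mul'_map_opLeft_assoc_symm_tmul,
        mul'_map_includeRight_coaction hβ hβbij.injective hγ]
      simp [Algebra.TensorProduct.tmul_mul_tmul]
    | add u v hu hv => simp only [map_add, hu, hv, MulOpposite.op_add, add_tmul]
  have hγ' : (translationAlgHom hβ hβbij.injective hγ).toLinearMap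
      = (opLeft k T).toLinearMap ∘ₗ γ := rfl
  ext h
  rw [convMul_apply, ofConv_toConv, ofConv_toConv, hγ', ← map_comp_rTensor, comp_apply,
    ← coaction_translation hcoassoc hβ hβbij hγ, hcollapse,
    mul'_comm_lTensor_theta_translation hcoassoc hβ hβbij hγ hθ]
  simp [Algebra.algebraMap_eq_smul_one, Algebra.TensorProduct.one_def, smul_tmul']

end HopfAlgebra

theorem stmt_7_general
    {k : Type*} [CommRing k] {H : Type*} [Ring H] [HopfAlgebra k H]
    {T : Type*} [Ring T] [Algebra k T]
    -- `ρ` is an algebra map making `T` a right `H`-comodule algebra: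
    (ρ : T →ₐ[k] T ⊗[k] H)
    (hcoassoc : ∀ x : T,
      (TensorProduct.map ρ.toLinearMap LinearMap.id) (ρ x)
        = (TensorProduct.assoc k T H H).symm
            ((TensorProduct.map LinearMap.id Coalgebra.comul) (ρ x)))
    -- the canonical (Galois) map `β(x ⊗ y) = x·y₍₀₎ ⊗ y₍₁₎`, assumed bijective:
    (β : T ⊗[k] T →ₗ[k] T ⊗[k] H)
    (hβ : ∀ x y : T, β (x ⊗ₜ[k] y) = (x ⊗ₜ[k] (1 : H)) * ρ y)
    (hβbij : Function.Bijective β)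
    -- `γ(h) = β⁻¹(1 ⊗ h) = h⁽¹⁾ ⊗ h⁽²⁾`:
    (γ : H →ₗ[k] T ⊗[k] T)
    (hγ : ∀ h : H, β (γ h) = (1 : T) ⊗ₜ[k] h)
    -- `θ(x) = (x₍₀₎·S(x₍₁₎)⁽²⁾)·S(x₍₁₎)⁽¹⁾`:
    (θ : T →ₗ[k] T)
    (hθ : θ = LinearMap.mul' k T
        ∘ₗ (TensorProduct.comm k T T).toLinearMap
        ∘ₗ LinearMap.lTensor T (LinearMap.mul' k T)
        ∘ₗ (TensorProduct.assoc k T T T).toLinearMap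
        ∘ₗ LinearMap.rTensor T (TensorProduct.comm k T T).toLinearMap
        ∘ₗ (TensorProduct.assoc k T T T).symm.toLinearMap
        ∘ₗ LinearMap.lTensor T (γ ∘ₗ HopfAlgebra.antipode (R := k))
        ∘ₗ ρ.toLinearMap)
    :
    ∀ h : H,
      (LinearMap.lTensor T θ) (γ h)
        = (TensorProduct.comm k T T) (γ (HopfAlgebra.antipode (R := k) h)) := by
  have hθ' : θ = mulFlip k T ∘ₗ lTensor T (γ ∘ₗ antipode k) ∘ₗ ρ.toLinearMap := by
    rw [hθ]; rfl
  have hinv := (translationAlgHom hβ hβbij.injective hγ).toConv_comp_antipode_mul_toConv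
  have hF := translationAlgHom_convMul_opLeft_comm_lTensor hcoassoc hβ hβbij hγ hθ'
  intro h
  have hS : opLeft k T (γ (antipode k h))
      = opLeft k T (TensorProduct.comm k T T (lTensor T θ (γ h))) :=
    congr($(WithConv.ofConv_injective.eq_iff.mpr (left_inv_eq_right_inv hinv hF)) h)
  rw [(opLeft k T).injective hS, TensorProduct.comm_comm]

/-- For a faithfully flat `H`-Galois object `T` and every `h ∈ H`,
`h⁽¹⁾ ⊗ θ(h⁽²⁾) = S(h)⁽²⁾ ⊗ S(h)⁽¹⁾` in `T ⊗ T`; that is,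
`(id_T ⊗ θ)(γ(h)) = τ(γ(S(h)))` with `τ` the flip. -/
theorem stmt_7
    {k : Type*} [CommRing k] {H : Type*} [Ring H] [HopfAlgebra k H]
    {T : Type*} [Ring T] [Algebra k T]
    -- `ρ` is an algebra map making `T` a right `H`-comodule algebra:
    (ρ : T →ₐ[k] T ⊗[k] H)
    (hcoassoc : ∀ x : T,
      (TensorProduct.map ρ.toLinearMap LinearMap.id) (ρ x)
        = (TensorProduct.assoc k T H H).symm
            ((TensorProduct.map LinearMap.id Coalgebra.comul) (ρ x)))
    (hcounit : ∀ x : T,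
      (TensorProduct.rid k T)
        ((TensorProduct.map LinearMap.id Coalgebra.counit) (ρ x)) = x)
    -- the coinvariants are exactly `k·1`:
    (hcoinv : {t : T | ρ t = t ⊗ₜ[k] (1 : H)} = Set.range (algebraMap k T))
    -- `T` is faithfully flat over `k`:
    (hflat : Module.FaithfullyFlat k T)
    -- the canonical (Galois) map `β(x ⊗ y) = x·y₍₀₎ ⊗ y₍₁₎`, assumed bijective:
    (β : T ⊗[k] T →ₗ[k] T ⊗[k] H)
    (hβ : ∀ x y : T, β (x ⊗ₜ[k] y) = (x ⊗ₜ[k] (1 : H)) * ρ y)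
    (hβbij : Function.Bijective β)
    -- `γ(h) = β⁻¹(1 ⊗ h) = h⁽¹⁾ ⊗ h⁽²⁾`:
    (γ : H →ₗ[k] T ⊗[k] T)
    (hγ : ∀ h : H, β (γ h) = (1 : T) ⊗ₜ[k] h)
    -- `θ(x) = (x₍₀₎·S(x₍₁₎)⁽²⁾)·S(x₍₁₎)⁽¹⁾`:
    (θ : T →ₗ[k] T)
    (hθ : θ = LinearMap.mul' k T
        ∘ₗ (TensorProduct.comm k T T).toLinearMap
        ∘ₗ LinearMap.lTensor T (LinearMap.mul' k T)
        ∘ₗ (TensorProduct.assoc k T T T).toLinearMap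
        ∘ₗ LinearMap.rTensor T (TensorProduct.comm k T T).toLinearMap
        ∘ₗ (TensorProduct.assoc k T T T).symm.toLinearMap
        ∘ₗ LinearMap.lTensor T (γ ∘ₗ HopfAlgebra.antipode (R := k))
        ∘ₗ ρ.toLinearMap)
    :
    ∀ h : H,
      (LinearMap.lTensor T θ) (γ h)
        = (TensorProduct.comm k T T) (γ (HopfAlgebra.antipode (R := k) h)) :=
  stmt_7_general ρ hcoassoc β hβ hβbij γ hγ θ hθ
end

section
/- Let T be a faithfully flat H-Galois object over k. Then for every x ∈ T one has ρ(θ(x)) = θ(x₍₀₎) ⊗ S²(x₍₁₎) in T ⊗ H; that is, θ is H-colinear from T with its given coaction to T with the coaction twisted by the Hopf algebra endomorphism S². -/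
/-!
Write `γ(h) = h⁽¹⁾ ⊗ h⁽²⁾` and `ξ(h) = S(h)⁽²⁾ S(h)⁽¹⁾`, so that `θ(x) = x₍₀₎ ξ(x₍₁₎)`.
Injectivity of `β ⊗ H` gives `h⁽¹⁾ ⊗ h⁽²⁾₍₀₎ ⊗ h⁽²⁾₍₁₎ = h₍₁₎⁽¹⁾ ⊗ h₍₁₎⁽²⁾ ⊗ h₍₂₎` and
`h⁽¹⁾₍₀₎ ⊗ h⁽¹⁾₍₁₎ ⊗ h⁽²⁾ = h₍₂₎⁽¹⁾ ⊗ S(h₍₁₎) ⊗ h₍₂₎⁽²⁾`. The second one rests on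
`h⁽¹⁾₍₀₎ h⁽²⁾ ⊗ h⁽¹⁾₍₁₎ = 1 ⊗ S(h)`: both sides are convolution inverses of `ι : h ↦ 1 ⊗ h` in
`Hom(H, T ⊗ H)`. Together with `Δ ∘ S = (S ⊗ S) ∘ Δᶜᵒᵖ` they give `ρ ∘ ξ = (ι ∘ S) * η`, where
`η(h) = ξ(h₍₁₎) ⊗ S²(h₍₂₎)`, hence `ι * (ρ ∘ ξ) = η` and
`ρ(θ x) = (x₍₀₎ ⊗ 1) (ι * (ρ ∘ ξ))(x₍₁₎) = (x₍₀₎ ⊗ 1) η(x₍₁₎) = θ(x₍₀₎) ⊗ S²(x₍₁₎)`.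
-/

open TensorProduct LinearMap HopfAlgebra Coalgebra WithConv

namespace HopfAlgebra

variable {R H : Type*} [CommSemiring R] [Semiring H] [HopfAlgebra R H]

lemma comul_mul_tmul_antipode (x a : H) :
    mul' R (H ⊗[R] H) (map comul (TensorProduct.mk R H H x ∘ₗ antipode R) (comul a)) =
      (a * x) ⊗ₜ 1 := by
  have hassoc : ∀ w : H ⊗[R] H,
      mul' R (H ⊗[R] H) (map comul (TensorProduct.mk R H H x ∘ₗ antipode R) w) =
        map (mulRight R x) (mul' R H ∘ₗ (antipode R).lTensor H)
        (TensorProduct.assoc R H H H (comul.rTensor H w)) := by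
    intro w
    induction w using TensorProduct.induction_on with
    | zero => simp
    | add u v hu hv => simp only [map_add, hu, hv]
    | tmul p q =>
      simp only [map_tmul, rTensor_tmul, mul'_apply, coe_comp, Function.comp_apply, mk_apply]
      induction comul (R := R) p using TensorProduct.induction_on with
      | zero => simp
      | add u v hu hv => simp only [add_mul, add_tmul, map_add, hu, hv]
      | tmul p₁ p₂ => simp
  rw [hassoc, coassoc_apply, ← comp_apply (map _ _), map_comp_lTensor, comp_assoc,
    mul_antipode_lTensor_comul, ← map_comp_lTensor, comp_apply, lTensor_counit_comul]
  simp

variable {A : Type*} [Semiring A] [Algebra R A]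

lemma algHom_comp_antipode_mul_algHom (φ : H →ₐ[R] A) :
    toConv (φ.toLinearMap ∘ₗ antipode R) * toConv φ.toLinearMap = 1 := by
  apply WithConv.ofConv_injective
  calc _ = φ.toLinearMap ∘ₗ
        (toConv (antipode R) * toConv LinearMap.id : WithConv (H →ₗ[R] H)).ofConv :=
        (algHom_comp_convMul_distrib φ _ _).symm
    _ = _ := by ext; simp

lemma algHom_mul_algHom_comp_antipode (φ : H →ₐ[R] A) :
    toConv φ.toLinearMap * toConv (φ.toLinearMap ∘ₗ antipode R) = 1 := by
  apply WithConv.ofConv_injective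
  calc _ = φ.toLinearMap ∘ₗ
        (toConv LinearMap.id * toConv (antipode R) : WithConv (H →ₗ[R] H)).ofConv :=
        (algHom_comp_convMul_distrib φ _ _).symm
    _ = _ := by ext; simp

lemma comul_comp_antipode :
    comul ∘ₗ antipode R =
      map (antipode R) (antipode R) ∘ₗ (TensorProduct.comm R H H).toLinearMap ∘ₗ comul := by
  have hright : toConv comul * toConv (map (antipode R) (antipode R) ∘ₗ
      (TensorProduct.comm R H H).toLinearMap ∘ₗ comul) =
      (1 : WithConv (H →ₗ[R] H ⊗[R] H)) := by
    have key : ∀ w : H ⊗[R] H,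
        mul' R (H ⊗[R] H) (map comul
            (map (antipode R) (antipode R) ∘ₗ (TensorProduct.comm R H H).toLinearMap)
            (TensorProduct.assoc R H H H (comul.rTensor H w))) =
          mul' R H ((antipode R).lTensor H w) ⊗ₜ 1 := by
      intro w
      induction w using TensorProduct.induction_on with
      | zero => simp
      | add u v hu hv => simp only [map_add, add_tmul, hu, hv]
      | tmul b c =>
        simp only [rTensor_tmul, lTensor_tmul, mul'_apply]
        rw [← comul_mul_tmul_antipode]
        induction comul (R := R) b using TensorProduct.induction_on with
        | zero => simp
        | add u v hu hv => simp only [add_tmul, map_add, hu, hv]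
        | tmul b₁ b₂ => simp
    ext a
    rw [convMul_apply, ofConv_toConv, ofConv_toConv,
      ← LinearMap.comp_assoc comul (TensorProduct.comm R H H).toLinearMap, ← map_comp_lTensor,
      comp_apply, ← coassoc_apply, key, mul_antipode_lTensor_comul_apply]
    simp
  exact congr_arg ofConv
    (left_inv_eq_right_inv (algHom_comp_antipode_mul_algHom (Bialgebra.comulAlgHom R H)) hright)

lemma comul_antipode (a : H) :
    comul (antipode R a) = map (antipode R) (antipode R) (TensorProduct.comm R H H (comul a)) :=
  LinearMap.congr_fun comul_comp_antipode a

end HopfAlgebra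

namespace HopfGalois

open Algebra.TensorProduct (includeLeft includeRight)

variable {k H T M : Type*} [CommSemiring k] [Semiring H] [HopfAlgebra k H] [Semiring T]
  [Algebra k T] [AddCommMonoid M] [Module k M]

local notation "ι" => AlgHom.toLinearMap (includeRight : H →ₐ[k] T ⊗[k] H)

noncomputable def extendLeft (F : M →ₗ[k] T ⊗[k] H) : T ⊗[k] M →ₗ[k] T ⊗[k] H :=
  mul' k (T ⊗[k] H) ∘ₗ map (includeLeft : T →ₐ[k] T ⊗[k] H).toLinearMap F

@[simp] lemma extendLeft_tmul (F : M →ₗ[k] T ⊗[k] H) (x : T) (m : M) :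
    extendLeft F (x ⊗ₜ m) = (x ⊗ₜ 1) * F m := rfl

variable (ρ : T →ₐ[k] T ⊗[k] H)

noncomputable abbrev galoisMap : T ⊗[k] T →ₗ[k] T ⊗[k] H := extendLeft ρ.toLinearMap

noncomputable def galoisMap' : T ⊗[k] T →ₗ[k] T ⊗[k] H :=
  mul' k (T ⊗[k] H) ∘ₗ map ρ.toLinearMap (includeLeft : T →ₐ[k] T ⊗[k] H).toLinearMap

@[simp] lemma galoisMap'_tmul (x y : T) : galoisMap' ρ (x ⊗ₜ y) = ρ x * (y ⊗ₜ 1) := rfl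

variable {ρ} (γ : H →ₗ[k] T ⊗[k] T)

lemma mul'_galoisInv (hcounit : ∀ x, TensorProduct.rid k T (counit.lTensor T (ρ x)) = x)
    (hγ : ∀ h, galoisMap ρ (γ h) = 1 ⊗ₜ h) (h : H) :
    mul' k T (γ h) = algebraMap k T (counit h) := by
  set E : T ⊗[k] H →ₗ[k] T := (TensorProduct.rid k T).toLinearMap ∘ₗ counit.lTensor T
  have hE : ∀ (x : T) (u : T ⊗[k] H), E ((x ⊗ₜ 1) * u) = x * E u := by
    intro x u
    induction u using TensorProduct.induction_on with
    | zero => simp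
    | add u v hu hv => simp only [mul_add, map_add, hu, hv]
    | tmul c g => simp [E, Algebra.smul_def, Algebra.left_comm]
  have hEβ : E ∘ₗ galoisMap ρ = mul' k T := by
    ext x y
    simp only [AlgebraTensorModule.curry_apply, curry_apply, coe_restrictScalars, coe_comp,
      Function.comp_apply, extendLeft_tmul, mul'_apply, hE]
    exact congr_arg (x * ·) (hcounit y)
  rw [← hEβ, comp_apply, hγ]
  simp [E, Algebra.algebraMap_eq_smul_one]

-- For `v = x ⊗ y` both sides are `x y₍₀₎ ⊗ y₍₁₎ ⊗ y₍₂₎`.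
lemma rTensor_galoisMap_assoc_lTensor
    (hcoassoc : ∀ x, ρ.toLinearMap.rTensor H (ρ x) =
      (TensorProduct.assoc k T H H).symm (comul.lTensor T (ρ x))) (v : T ⊗[k] T) :
    (galoisMap ρ).rTensor H ((TensorProduct.assoc k T T H).symm (ρ.toLinearMap.lTensor T v)) =
      (TensorProduct.assoc k T H H).symm (comul.lTensor T (galoisMap ρ v)) := by
  have hβ : ∀ (x : T) (u : T ⊗[k] H),
      (galoisMap ρ).rTensor H ((TensorProduct.assoc k T T H).symm (x ⊗ₜ u)) =
        ((x ⊗ₜ 1) ⊗ₜ 1) * ρ.toLinearMap.rTensor H u := by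
    intro x u
    induction u using TensorProduct.induction_on with
    | zero => simp
    | add u v hu hv => simp only [tmul_add, mul_add, map_add, hu, hv]
    | tmul c g => simp
  have hδ : ∀ (x : T) (u : T ⊗[k] H),
      ((x ⊗ₜ 1) ⊗ₜ 1) * (TensorProduct.assoc k T H H).symm (comul.lTensor T u) =
        (TensorProduct.assoc k T H H).symm (comul.lTensor T ((x ⊗ₜ 1) * u)) := by
    intro x u
    induction u using TensorProduct.induction_on with
    | zero => simp
    | add u v hu hv => simp only [mul_add, map_add, hu, hv]
    | tmul c g =>
      simp only [lTensor_tmul, Algebra.TensorProduct.tmul_mul_tmul, one_mul]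
      induction comul (R := k) g using TensorProduct.induction_on with
      | zero => simp
      | add u v hu hv => simp only [tmul_add, mul_add, map_add, hu, hv]
      | tmul g₁ g₂ => simp
  induction v using TensorProduct.induction_on with
  | zero => simp
  | add u v hu hv => simp only [map_add, hu, hv]
  | tmul x y =>
    simp only [lTensor_tmul, AlgHom.toLinearMap_apply, hβ, hcoassoc, hδ, extendLeft_tmul]

lemma lTensor_coaction_galoisInv
    (hcoassoc : ∀ x, ρ.toLinearMap.rTensor H (ρ x) =
      (TensorProduct.assoc k T H H).symm (comul.lTensor T (ρ x)))
    (hbij : Function.Bijective (galoisMap ρ)) (hγ : ∀ h, galoisMap ρ (γ h) = 1 ⊗ₜ h)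
    (h : H) :
    ρ.toLinearMap.lTensor T (γ h) = TensorProduct.assoc k T T H (γ.rTensor H (comul h)) := by
  have hinj : Function.Injective
      ((galoisMap ρ).rTensor H ∘ (TensorProduct.assoc k T T H).symm) :=
    ((LinearEquiv.ofBijective _ hbij).rTensor H).injective.comp
      (TensorProduct.assoc k T T H).symm.injective
  apply hinj
  simp only [Function.comp_apply, LinearEquiv.symm_apply_apply,
    rTensor_galoisMap_assoc_lTensor hcoassoc, hγ, ← rTensor_comp_apply]
  rw [show galoisMap ρ ∘ₗ γ = TensorProduct.mk k T H 1 from LinearMap.ext hγ, lTensor_tmul]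
  induction comul (R := k) h using TensorProduct.induction_on with
  | zero => simp
  | add u v hu hv => simp only [tmul_add, map_add, hu, hv]
  | tmul g₁ g₂ => simp

lemma galoisMap'_galoisInv
    (hcoassoc : ∀ x, ρ.toLinearMap.rTensor H (ρ x) =
      (TensorProduct.assoc k T H H).symm (comul.lTensor T (ρ x)))
    (hcounit : ∀ x, TensorProduct.rid k T (counit.lTensor T (ρ x)) = x)
    (hbij : Function.Bijective (galoisMap ρ)) (hγ : ∀ h, galoisMap ρ (γ h) = 1 ⊗ₜ h)
    (h : H) :
    galoisMap' ρ (γ h) = 1 ⊗ₜ antipode k h := by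
  have hmul : ∀ v : T ⊗[k] T, mul' k (T ⊗[k] H) (map (galoisMap' ρ) ι
      ((TensorProduct.assoc k T T H).symm (ρ.toLinearMap.lTensor T v))) = ρ (mul' k T v) := by
    intro v
    induction v using TensorProduct.induction_on with
    | zero => simp
    | add u v hu hv => simp only [map_add, hu, hv]
    | tmul x y =>
      suffices ∀ u : T ⊗[k] H, mul' k (T ⊗[k] H) (map (galoisMap' ρ) ι
          ((TensorProduct.assoc k T T H).symm (x ⊗ₜ u))) = ρ x * u by
        simp only [lTensor_tmul, AlgHom.toLinearMap_apply, this, mul'_apply, map_mul]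
      intro u
      induction u using TensorProduct.induction_on with
      | zero => simp
      | add u v hu hv => simp only [tmul_add, mul_add, map_add, hu, hv]
      | tmul c g => simp [mul_assoc]
  have hinv : toConv (galoisMap' ρ ∘ₗ γ) * toConv ι = 1 := by
    ext h
    rw [convMul_apply, ofConv_toConv, ofConv_toConv, ← map_comp_rTensor, comp_apply,
      ← (TensorProduct.assoc k T T H).symm_apply_apply (γ.rTensor H _),
      ← lTensor_coaction_galoisInv γ hcoassoc hbij hγ, hmul, mul'_galoisInv γ hcounit hγ]
    simp
  have := left_inv_eq_right_inv hinv (algHom_mul_algHom_comp_antipode includeRight)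
  exact congr($this h)

-- For `v = x ⊗ y` both sides are `x₍₀₎ y₍₀₎ ⊗ y₍₁₎ ⊗ x₍₁₎`.
lemma rTensor_galoisMap_rightComm_rTensor (v : T ⊗[k] T) :
    (galoisMap ρ).rTensor H (TensorProduct.rightComm k T H T (ρ.toLinearMap.rTensor T v)) =
      TensorProduct.rightComm k T H H ((galoisMap' ρ).rTensor H
        ((TensorProduct.assoc k T T H).symm (ρ.toLinearMap.lTensor T v))) := by
  induction v using TensorProduct.induction_on with
  | zero => simp
  | add u v hu hv => simp only [map_add, hu, hv]
  | tmul x y =>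
    have hx : ∀ V : T ⊗[k] H,
        (galoisMap' ρ).rTensor H ((TensorProduct.assoc k T T H).symm (x ⊗ₜ V)) =
          (LinearMap.mul k (T ⊗[k] H) (ρ x) ∘ₗ
            (includeLeft : T →ₐ[k] T ⊗[k] H).toLinearMap).rTensor H V := by
      intro V
      induction V using TensorProduct.induction_on with
      | zero => simp
      | add u v hu hv => simp only [tmul_add, map_add, hu, hv]
      | tmul d b => simp
    simp only [rTensor_tmul, lTensor_tmul, AlgHom.toLinearMap_apply, hx]
    induction ρ x using TensorProduct.induction_on with
    | zero => simp
    | add u v hu hv =>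
      simp only [add_tmul, map_add, add_comp, rTensor_add, LinearMap.add_apply, hu, hv]
    | tmul c a =>
      simp only [rightComm_tmul, rTensor_tmul, extendLeft_tmul, AlgHom.toLinearMap_apply]
      induction ρ y using TensorProduct.induction_on with
      | zero => simp
      | add u v hu hv => simp only [mul_add, add_tmul, map_add, hu, hv]
      | tmul d b => simp

lemma rTensor_coaction_galoisInv
    (hcoassoc : ∀ x, ρ.toLinearMap.rTensor H (ρ x) =
      (TensorProduct.assoc k T H H).symm (comul.lTensor T (ρ x)))
    (hcounit : ∀ x, TensorProduct.rid k T (counit.lTensor T (ρ x)) = x)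
    (hbij : Function.Bijective (galoisMap ρ)) (hγ : ∀ h, galoisMap ρ (γ h) = 1 ⊗ₜ h)
    (h : H) :
    ρ.toLinearMap.rTensor T (γ h) =
      TensorProduct.rightComm k T T H
        (map γ (antipode k) (TensorProduct.comm k H H (comul h))) := by
  have hinj : Function.Injective ((galoisMap ρ).rTensor H ∘ TensorProduct.rightComm k T H T) :=
    ((LinearEquiv.ofBijective _ hbij).rTensor H).injective.comp
      (TensorProduct.rightComm k T H T).injective
  apply hinj
  simp only [Function.comp_apply, rTensor_galoisMap_rightComm_rTensor, lTensor_coaction_galoisInv γ hcoassoc hbij hγ,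
    LinearEquiv.symm_apply_apply, ← rTensor_comp_apply,
    show galoisMap' ρ ∘ₗ γ = TensorProduct.mk k T H 1 ∘ₗ antipode k from
      LinearMap.ext (galoisMap'_galoisInv γ hcoassoc hcounit hbij hγ)]
  rw [← rightComm_symm (R := k) (M := T) (N := T) (P := H), LinearEquiv.symm_apply_apply]
  induction comul (R := k) h using TensorProduct.induction_on with
  | zero => simp
  | add u v hu hv => simp only [map_add, hu, hv]
  | tmul a b => simp [hγ]

variable (k) in
noncomputable def galoisTwist : H →ₗ[k] T :=
  mul' k T ∘ₗ (TensorProduct.comm k T T).toLinearMap ∘ₗ γ ∘ₗ antipode k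

lemma galoisMap_comm_galoisInv_antipode
    (hcoassoc : ∀ x, ρ.toLinearMap.rTensor H (ρ x) =
      (TensorProduct.assoc k T H H).symm (comul.lTensor T (ρ x)))
    (hcounit : ∀ x, TensorProduct.rid k T (counit.lTensor T (ρ x)) = x)
    (hbij : Function.Bijective (galoisMap ρ)) (hγ : ∀ h, galoisMap ρ (γ h) = 1 ⊗ₜ h)
    (a : H) :
    galoisMap ρ (TensorProduct.comm k T T (γ (antipode k a))) =
      map (galoisTwist k γ) (antipode k ∘ₗ antipode k) (comul a) := by
  have hcomm : ∀ v : T ⊗[k] T, galoisMap ρ (TensorProduct.comm k T T v) =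
      extendLeft LinearMap.id (TensorProduct.comm k _ _ (ρ.toLinearMap.rTensor T v)) := by
    intro v
    induction v using TensorProduct.induction_on with
    | zero => simp
    | add u v hu hv => simp only [map_add, hu, hv]
    | tmul x y => simp
  rw [hcomm, rTensor_coaction_galoisInv γ hcoassoc hcounit hbij hγ, comul_antipode]
  induction comul (R := k) a using TensorProduct.induction_on with
  | zero => simp
  | add u v hu hv => simp only [map_add, hu, hv]
  | tmul a₁ a₂ =>
    simp only [TensorProduct.comm_tmul, map_tmul, galoisTwist, coe_comp, Function.comp_apply,
      LinearEquiv.coe_coe]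
    induction γ (antipode k a₁) using TensorProduct.induction_on with
    | zero => simp
    | add u v hu hv => simp only [add_tmul, map_add, hu, hv]
    | tmul x y => simp

lemma coaction_galoisTwist
    (hcoassoc : ∀ x, ρ.toLinearMap.rTensor H (ρ x) =
      (TensorProduct.assoc k T H H).symm (comul.lTensor T (ρ x)))
    (hcounit : ∀ x, TensorProduct.rid k T (counit.lTensor T (ρ x)) = x)
    (hbij : Function.Bijective (galoisMap ρ)) (hγ : ∀ h, galoisMap ρ (γ h) = 1 ⊗ₜ h)
    (h : H) :
    ρ (galoisTwist k γ h) =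
      (toConv (ι ∘ₗ antipode k) *
        toConv (map (galoisTwist k γ) (antipode k ∘ₗ antipode k) ∘ₗ comul)) h := by
  have hmul : ∀ v : T ⊗[k] T, ρ (mul' k T (TensorProduct.comm k T T v)) =
      mul' k (T ⊗[k] H) (TensorProduct.comm k _ _ (map (galoisMap ρ ∘ₗ
        (TensorProduct.comm k T T).toLinearMap) ι
          ((TensorProduct.assoc k T T H).symm (ρ.toLinearMap.lTensor T v)))) := by
    intro v
    induction v using TensorProduct.induction_on with
    | zero => simp
    | add u v hu hv => simp only [map_add, hu, hv]
    | tmul x y =>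
      simp only [lTensor_tmul, AlgHom.toLinearMap_apply, TensorProduct.comm_tmul, mul'_apply,
        map_mul]
      induction ρ y using TensorProduct.induction_on with
      | zero => simp
      | add u v hu hv => simp only [tmul_add, add_mul, map_add, hu, hv]
      | tmul d b => simp [← mul_assoc]
  rw [galoisTwist, comp_apply, comp_apply, comp_apply, LinearEquiv.coe_coe, hmul,
    lTensor_coaction_galoisInv γ hcoassoc hbij hγ, LinearEquiv.symm_apply_apply, comul_antipode,
    convMul_apply]
  induction comul (R := k) h using TensorProduct.induction_on with
  | zero => simp
  | add u v hu hv => simp only [map_add, hu, hv]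
  | tmul a b =>
    simp only [TensorProduct.comm_tmul, map_tmul, rTensor_tmul, coe_comp, Function.comp_apply,
      LinearEquiv.coe_coe, galoisMap_comm_galoisInv_antipode γ hcoassoc hcounit hbij hγ]
    rfl

lemma includeRight_mul_coaction_galoisTwist
    (hcoassoc : ∀ x, ρ.toLinearMap.rTensor H (ρ x) =
      (TensorProduct.assoc k T H H).symm (comul.lTensor T (ρ x)))
    (hcounit : ∀ x, TensorProduct.rid k T (counit.lTensor T (ρ x)) = x)
    (hbij : Function.Bijective (galoisMap ρ)) (hγ : ∀ h, galoisMap ρ (γ h) = 1 ⊗ₜ h) :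
    toConv ι * toConv (ρ.toLinearMap ∘ₗ galoisTwist k γ) =
      toConv (map (galoisTwist k γ) (antipode k ∘ₗ antipode k) ∘ₗ comul) := by
  rw [show toConv (ρ.toLinearMap ∘ₗ galoisTwist k γ) = _ from
      WithConv.ext (LinearMap.ext (coaction_galoisTwist γ hcoassoc hcounit hbij hγ)),
    ← mul_assoc, algHom_mul_algHom_comp_antipode, one_mul]

variable (ρ) in
noncomputable def coactMul (f : H →ₗ[k] T) : T →ₗ[k] T :=
  mul' k T ∘ₗ f.lTensor T ∘ₗ ρ.toLinearMap

variable (ρ) in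
lemma coactMul_galoisTwist :
    coactMul ρ (galoisTwist k γ) = mul' k T ∘ₗ (TensorProduct.comm k T T).toLinearMap
      ∘ₗ (mul' k T).lTensor T ∘ₗ (TensorProduct.assoc k T T T).toLinearMap
      ∘ₗ (TensorProduct.comm k T T).toLinearMap.rTensor T
      ∘ₗ (TensorProduct.assoc k T T T).symm.toLinearMap ∘ₗ (γ ∘ₗ antipode k).lTensor T
      ∘ₗ ρ.toLinearMap := by
  ext x
  simp only [coactMul, coe_comp, Function.comp_apply]
  induction ρ.toLinearMap x using TensorProduct.induction_on with
  | zero => simp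
  | add u v hu hv => simp only [map_add, hu, hv]
  | tmul t h =>
    simp only [lTensor_tmul, galoisTwist, coe_comp, Function.comp_apply, mul'_apply]
    induction γ (antipode k h) using TensorProduct.induction_on with
    | zero => simp
    | add u v hu hv => simp only [tmul_add, map_add, mul_add, hu, hv]
    | tmul u v => simp [mul_assoc]

lemma coaction_coactMul
    (hcoassoc : ∀ x, ρ.toLinearMap.rTensor H (ρ x) =
      (TensorProduct.assoc k T H H).symm (comul.lTensor T (ρ x))) (f : H →ₗ[k] T) (x : T) :
    ρ (coactMul ρ f x) = extendLeft (toConv ι * toConv (ρ.toLinearMap ∘ₗ f)).ofConv (ρ x) := by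
  have hρ : ∀ u : T ⊗[k] H, ρ (mul' k T (f.lTensor T u)) =
      mul' k (T ⊗[k] H)
        ((ρ.toLinearMap ∘ₗ f).lTensor (T ⊗[k] H) (ρ.toLinearMap.rTensor H u)) := by
    intro u
    induction u using TensorProduct.induction_on with
    | zero => simp
    | add u v hu hv => simp only [map_add, hu, hv]
    | tmul t g => simp
  have hδ : ∀ (F : H →ₗ[k] T ⊗[k] H) (u : T ⊗[k] H),
      mul' k (T ⊗[k] H) (F.lTensor (T ⊗[k] H) ((TensorProduct.assoc k T H H).symm
        (comul.lTensor T u))) =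
      extendLeft (toConv ι * toConv F).ofConv u := by
    intro F u
    induction u using TensorProduct.induction_on with
    | zero => simp
    | add u v hu hv => simp only [map_add, hu, hv]
    | tmul t g =>
      simp only [lTensor_tmul, extendLeft_tmul, convMul_apply]
      induction comul (R := k) g using TensorProduct.induction_on with
      | zero => simp
      | add u v hu hv => simp only [tmul_add, mul_add, map_add, hu, hv]
      | tmul g₁ g₂ => simp [← mul_assoc]
  rw [coactMul, comp_apply, comp_apply, AlgHom.toLinearMap_apply, hρ, hcoassoc, hδ]

lemma map_coactMul_coaction
    (hcoassoc : ∀ x, ρ.toLinearMap.rTensor H (ρ x) =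
      (TensorProduct.assoc k T H H).symm (comul.lTensor T (ρ x)))
    (f : H →ₗ[k] T) (g : H →ₗ[k] H) (x : T) :
    map (coactMul ρ f) g (ρ x) = extendLeft (map f g ∘ₗ comul) (ρ x) := by
  have hδ : ∀ u : T ⊗[k] H,
      map (mul' k T ∘ₗ f.lTensor T) g ((TensorProduct.assoc k T H H).symm (comul.lTensor T u)) =
        extendLeft (map f g ∘ₗ comul) u := by
    intro u
    induction u using TensorProduct.induction_on with
    | zero => simp
    | add u v hu hv => simp only [map_add, hu, hv]
    | tmul t a =>
      simp only [lTensor_tmul, extendLeft_tmul, coe_comp, Function.comp_apply]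
      induction comul (R := k) a using TensorProduct.induction_on with
      | zero => simp
      | add u v hu hv => simp only [tmul_add, mul_add, map_add, hu, hv]
      | tmul a₁ a₂ => simp
  rw [coactMul, ← comp_assoc, ← map_comp_rTensor, comp_apply, hcoassoc, hδ]

end HopfGalois

theorem stmt_9_general
    {k : Type*} [CommRing k] {H : Type*} [Ring H] [HopfAlgebra k H]
    {T : Type*} [Ring T] [Algebra k T]
    -- `ρ` is an algebra map making `T` a right `H`-comodule algebra:
    (ρ : T →ₐ[k] T ⊗[k] H)
    (hcoassoc : ∀ x : T,
      (TensorProduct.map ρ.toLinearMap LinearMap.id) (ρ x)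
        = (TensorProduct.assoc k T H H).symm
            ((TensorProduct.map LinearMap.id Coalgebra.comul) (ρ x)))
    (hcounit : ∀ x : T,
      (TensorProduct.rid k T)
        ((TensorProduct.map LinearMap.id Coalgebra.counit) (ρ x)) = x)
    -- the canonical (Galois) map `β(x ⊗ y) = x·y₍₀₎ ⊗ y₍₁₎`, assumed bijective:
    (β : T ⊗[k] T →ₗ[k] T ⊗[k] H)
    (hβ : ∀ x y : T, β (x ⊗ₜ[k] y) = (x ⊗ₜ[k] (1 : H)) * ρ y)
    (hβbij : Function.Bijective β)
    -- `γ(h) = β⁻¹(1 ⊗ h) = h⁽¹⁾ ⊗ h⁽²⁾`: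
    (γ : H →ₗ[k] T ⊗[k] T)
    (hγ : ∀ h : H, β (γ h) = (1 : T) ⊗ₜ[k] h)
    -- `θ(x) = (x₍₀₎·S(x₍₁₎)⁽²⁾)·S(x₍₁₎)⁽¹⁾`:
    (θ : T →ₗ[k] T)
    (hθ : θ = LinearMap.mul' k T
        ∘ₗ (TensorProduct.comm k T T).toLinearMap
        ∘ₗ LinearMap.lTensor T (LinearMap.mul' k T)
        ∘ₗ (TensorProduct.assoc k T T T).toLinearMap
        ∘ₗ LinearMap.rTensor T (TensorProduct.comm k T T).toLinearMap
        ∘ₗ (TensorProduct.assoc k T T T).symm.toLinearMap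
        ∘ₗ LinearMap.lTensor T (γ ∘ₗ HopfAlgebra.antipode (R := k))
        ∘ₗ ρ.toLinearMap)
    :
    ∀ x : T,
      ρ (θ x)
        = (TensorProduct.map θ
            (HopfAlgebra.antipode (R := k) ∘ₗ HopfAlgebra.antipode (R := k))) (ρ x) := by
  obtain rfl : β = HopfGalois.galoisMap ρ := TensorProduct.ext' hβ
  have hθ' : θ = HopfGalois.coactMul ρ (HopfGalois.galoisTwist k γ) := by
    rw [HopfGalois.coactMul_galoisTwist]; exact hθ
  intro x
  rw [hθ', HopfGalois.coaction_coactMul hcoassoc,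
    HopfGalois.includeRight_mul_coaction_galoisTwist γ hcoassoc hcounit hβbij hγ,
    HopfGalois.map_coactMul_coaction hcoassoc]

/-- For a faithfully flat `H`-Galois object `T`,
`ρ(θ(x)) = θ(x₍₀₎) ⊗ S²(x₍₁₎)`: the map `θ` is `H`-colinear from `T` with its
given coaction to `T` with the coaction twisted by `S²`. -/
theorem stmt_9
    {k : Type*} [CommRing k] {H : Type*} [Ring H] [HopfAlgebra k H]
    {T : Type*} [Ring T] [Algebra k T]
    -- `ρ` is an algebra map making `T` a right `H`-comodule algebra:
    (ρ : T →ₐ[k] T ⊗[k] H)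
    (hcoassoc : ∀ x : T,
      (TensorProduct.map ρ.toLinearMap LinearMap.id) (ρ x)
        = (TensorProduct.assoc k T H H).symm
            ((TensorProduct.map LinearMap.id Coalgebra.comul) (ρ x)))
    (hcounit : ∀ x : T,
      (TensorProduct.rid k T)
        ((TensorProduct.map LinearMap.id Coalgebra.counit) (ρ x)) = x)
    -- the coinvariants are exactly `k·1`:
    (hcoinv : {t : T | ρ t = t ⊗ₜ[k] (1 : H)} = Set.range (algebraMap k T))
    -- `T` is faithfully flat over `k`:
    (hflat : Module.FaithfullyFlat k T)
    -- the canonical (Galois) map `β(x ⊗ y) = x·y₍₀₎ ⊗ y₍₁₎`, assumed bijective: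
    (β : T ⊗[k] T →ₗ[k] T ⊗[k] H)
    (hβ : ∀ x y : T, β (x ⊗ₜ[k] y) = (x ⊗ₜ[k] (1 : H)) * ρ y)
    (hβbij : Function.Bijective β)
    -- `γ(h) = β⁻¹(1 ⊗ h) = h⁽¹⁾ ⊗ h⁽²⁾`:
    (γ : H →ₗ[k] T ⊗[k] T)
    (hγ : ∀ h : H, β (γ h) = (1 : T) ⊗ₜ[k] h)
    -- `θ(x) = (x₍₀₎·S(x₍₁₎)⁽²⁾)·S(x₍₁₎)⁽¹⁾`:
    (θ : T →ₗ[k] T)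
    (hθ : θ = LinearMap.mul' k T
        ∘ₗ (TensorProduct.comm k T T).toLinearMap
        ∘ₗ LinearMap.lTensor T (LinearMap.mul' k T)
        ∘ₗ (TensorProduct.assoc k T T T).toLinearMap
        ∘ₗ LinearMap.rTensor T (TensorProduct.comm k T T).toLinearMap
        ∘ₗ (TensorProduct.assoc k T T T).symm.toLinearMap
        ∘ₗ LinearMap.lTensor T (γ ∘ₗ HopfAlgebra.antipode (R := k))
        ∘ₗ ρ.toLinearMap)
    :
    ∀ x : T,
      ρ (θ x)
        = (TensorProduct.map θ
            (HopfAlgebra.antipode (R := k) ∘ₗ HopfAlgebra.antipode (R := k))) (ρ x) :=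
  stmt_9_general ρ hcoassoc hcounit β hβ hβbij γ hγ θ hθ
end
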